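/- Let λ₁, λ₂, c₁, c₂, θ > 0 and define the closed-loop planar system η̇₁ = λ₂(1 - e^{η₂}), η̇₂ = λ₁(1 - e^{η₁}) + u* - u with feedback u = u* + λ₂[-c₂(e^{-z} - 1) - θc₁(e^{c₁η₁} - 1) + (λ₁/λ₂)(1 - e^{η₁}) - c₁(1 - e^{η₂})], where z = η₂ - c₁η₁. Then along trajectories, the Lyapunov function V₃(η) = θ(e^{-c₁η₁} - 1 + c₁η₁) + (e^z - 1 - z) satisfies V̇₃ = -4λ₂[θc₁ sinh²(c₁η₁/2) + c₂ sinh²(z/2)]. -/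

import Mathlib

/-!
Write `a = c₁η₁`, `z = η₂ - c₁η₁` and `ω(q) = e^q - 1 - q`, so that `V₃ = θ ω(-a) + ω(z)` and
`ω'(q) = e^q - 1`. The feedback is designed so that the closed loop gives
`ż = λ₂ (c₂ (e^{-z} - 1) + θ c₁ (e^a - 1))`. The `c₂`-part of `V̇₃` is then
`λ₂ c₂ (e^z - 1)(e^{-z} - 1)`, and since `e^{η₂} = e^z e^a` the `θ`-terms combine to
`λ₂ θ c₁ (e^a - 1)(e^{-a} - 1)`; both products are `-4 sinh²(q/2)`.
-/

open Real

theorem HasDerivAt.exp_sub_one_sub {f : ℝ → ℝ} {f' x : ℝ} (hf : HasDerivAt f f' x) :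
    HasDerivAt (fun s => Real.exp (f s) - 1 - f s) ((Real.exp (f x) - 1) * f') x := by
  simpa only [sub_mul, one_mul] using
    HasDerivAt.fun_sub (HasDerivAt.sub_const 1 (HasDerivAt.exp hf)) hf

theorem Real.exp_sub_one_mul_exp_neg_sub_one (q : ℝ) :
    (exp q - 1) * (exp (-q) - 1) = -4 * sinh (q / 2) ^ 2 := by
  have hq : exp q = exp (q / 2) ^ 2 := by rw [← exp_nat_mul]; ring_nf
  have hnq : exp (-q) = (exp (q / 2))⁻¹ ^ 2 := by rw [← exp_neg, ← exp_nat_mul]; ring_nf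
  rw [sinh_eq, exp_neg (q / 2), hq, hnq]
  field_simp
  ring

theorem Real.exp_neg_sub_one_mul_exp_add_sub_one_add (a z : ℝ) :
    (exp (-a) - 1) * (exp (z + a) - 1) + (exp z - 1) * (exp a - 1)
      = (exp a - 1) * (exp (-a) - 1) := by
  have hinv : exp (-a) * exp a = 1 := by rw [← exp_add, neg_add_cancel, exp_zero]
  rw [exp_add]
  linear_combination (exp z - 1) * hinv

theorem hasDerivAt_backstepping_error {lam1 lam2 c1 c2 θ ustar t : ℝ} {η1 η2 : ℝ → ℝ}
    (h2 : lam2 ≠ 0)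
    (hd1 : HasDerivAt η1 (lam2 * (1 - exp (η2 t))) t)
    (hd2 : HasDerivAt η2
      (lam1 * (1 - exp (η1 t)) + ustar -
        (ustar + lam2 * (-c2 * (exp (-(η2 t - c1 * η1 t)) - 1)
          - θ * c1 * (exp (c1 * η1 t) - 1)
          + lam1 / lam2 * (1 - exp (η1 t))
          - c1 * (1 - exp (η2 t))))) t) :
    HasDerivAt (fun s => η2 s - c1 * η1 s)
      (lam2 * (c2 * (exp (-(η2 t - c1 * η1 t)) - 1) + θ * c1 * (exp (c1 * η1 t) - 1))) t :=
  (HasDerivAt.fun_sub hd2 (HasDerivAt.const_mul c1 hd1)).congr_deriv (by field_simp; ring)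

theorem V3_derivative_along_trajectories_general
    (lam1 lam2 c1 c2 θ ustar : ℝ)
    (h2 : 0 < lam2)
    (η1 η2 : ℝ → ℝ) (t : ℝ)
    (hd1 : HasDerivAt η1 (lam2 * (1 - Real.exp (η2 t))) t)
    (hd2 : HasDerivAt η2
      (lam1 * (1 - Real.exp (η1 t)) + ustar -
        (ustar + lam2 * (-c2 * (Real.exp (-(η2 t - c1 * η1 t)) - 1)
          - θ * c1 * (Real.exp (c1 * η1 t) - 1)
          + lam1 / lam2 * (1 - Real.exp (η1 t))
          - c1 * (1 - Real.exp (η2 t))))) t) :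
    HasDerivAt (fun s : ℝ =>
        θ * (Real.exp (-c1 * η1 s) - 1 + c1 * η1 s)
        + (Real.exp (η2 s - c1 * η1 s) - 1 - (η2 s - c1 * η1 s)))
      (-4 * lam2 * (θ * c1 * (Real.sinh (c1 * η1 t / 2)) ^ 2
        + c2 * (Real.sinh ((η2 t - c1 * η1 t) / 2)) ^ 2)) t := by
  have hz := hasDerivAt_backstepping_error h2.ne' hd1 hd2
  have ha : HasDerivAt (fun s => -c1 * η1 s) (-c1 * (lam2 * (1 - exp (η2 t)))) t :=
    HasDerivAt.const_mul (-c1) hd1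
  have hV := HasDerivAt.fun_add (HasDerivAt.const_mul θ ha.exp_sub_one_sub) hz.exp_sub_one_sub
  refine (hV.congr_deriv ?_).congr_of_eventuallyEq (.of_forall fun s => by ring)
  have hsa := exp_sub_one_mul_exp_neg_sub_one (c1 * η1 t)
  have hsz := exp_sub_one_mul_exp_neg_sub_one (η2 t - c1 * η1 t)
  have hcross := exp_neg_sub_one_mul_exp_add_sub_one_add (c1 * η1 t) (η2 t - c1 * η1 t)
  rw [sub_add_cancel] at hcross
  simp only [neg_mul]
  linear_combination lam2 * θ * c1 * (hcross + hsa) + lam2 * c2 * hsz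

theorem V3_derivative_along_trajectories
    (lam1 lam2 c1 c2 θ ustar : ℝ)
    (h1 : 0 < lam1) (h2 : 0 < lam2) (hc1 : 0 < c1) (hc2 : 0 < c2) (hθ : 0 < θ)
    (η1 η2 : ℝ → ℝ) (t : ℝ)
    (hd1 : HasDerivAt η1 (lam2 * (1 - Real.exp (η2 t))) t)
    (hd2 : HasDerivAt η2
      (lam1 * (1 - Real.exp (η1 t)) + ustar -
        (ustar + lam2 * (-c2 * (Real.exp (-(η2 t - c1 * η1 t)) - 1)
          - θ * c1 * (Real.exp (c1 * η1 t) - 1)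
          + lam1 / lam2 * (1 - Real.exp (η1 t))
          - c1 * (1 - Real.exp (η2 t))))) t) :
    HasDerivAt (fun s : ℝ =>
        θ * (Real.exp (-c1 * η1 s) - 1 + c1 * η1 s)
        + (Real.exp (η2 s - c1 * η1 s) - 1 - (η2 s - c1 * η1 s)))
      (-4 * lam2 * (θ * c1 * (Real.sinh (c1 * η1 t / 2)) ^ 2
        + c2 * (Real.sinh ((η2 t - c1 * η1 t) / 2)) ^ 2)) t :=
  V3_derivative_along_trajectories_general lam1 lam2 c1 c2 θ ustar h2 η1 η2 t hd1 hd2
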